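/- arXiv:2502.01539 — 4 statements merged into one kernel-verified Lean document; each statement's English description precedes it below -/
import Mathlib

section
/- If Z has the property that for every i = 1,…,s the natural projection Z → P(V_1)×⋯×P(V_i)^∧×⋯×P(V_s) (omitting the i-th factor) is surjective, then D ⊆ cl(C ∩ U), the Zariski closure of C ∩ U in V. -/
noncomputable section

open MvPolynomial

variable (k : Type) [Field k] {s : ℕ} (n : Fin s → ℕ)

/-- The `i`-th component `v_i ∈ V_i = k^{n i}` of a point `v ∈ V = V₁ × ⋯ × V_s`. -/
def comp (x : ((i : Fin s) × Fin (n i)) → k) (i : Fin s) : Fin (n i) → k :=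
  fun a => x ⟨i, a⟩

/-- The action `t · v` of `t ∈ T = (k*)^s` on `v ∈ V`. -/
def scale (t : Fin s → k) (x : ((i : Fin s) × Fin (n i)) → k) :
    ((i : Fin s) × Fin (n i)) → k :=
  fun p => t p.1 * x p

/-- `q ∈ k[V]` is multi-homogeneous of multi-degree `l`. -/
def IsMultiHom (q : MvPolynomial ((i : Fin s) × Fin (n i)) k) (l : Fin s → ℕ) : Prop :=
  ∀ t : Fin s → k, (∀ i, t i ≠ 0) → ∀ x : ((i : Fin s) × Fin (n i)) → k,
    eval (scale k n t x) q = (∏ i, t i ^ l i) * eval x q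

/-- `D = ⋃ᵢ {v ∈ V | vᵢ = 0}`. -/
def Dset : Set (((i : Fin s) × Fin (n i)) → k) := {x | ∃ i, comp k n x i = 0}

/-- `U = V ∖ D`. -/
def Uset : Set (((i : Fin s) × Fin (n i)) → k) := (Dset k n)ᶜ

/-- The multi-cone `C = {v ∈ V | q₁(v) = ⋯ = q_m(v) = 0}`. -/
def Cset {m : ℕ} (q : Fin m → MvPolynomial ((i : Fin s) × Fin (n i)) k) :
    Set (((i : Fin s) × Fin (n i)) → k) :=
  {x | ∀ j, eval x (q j) = 0}

/-- The canonical projection `π_{V₁} × ⋯ × π_{V_s} : U → ℙ(V₁) × ⋯ × ℙ(V_s)`. -/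
def toProj (x : ((i : Fin s) × Fin (n i)) → k) (hx : x ∈ Uset k n) :
    (i : Fin s) → Projectivization k (Fin (n i) → k) :=
  fun i => Projectivization.mk k (comp k n x i) (fun h => hx ⟨i, h⟩)

/-- `Z = {p ∈ ℙ(V₁) × ⋯ × ℙ(V_s) | q₁(p) = ⋯ = q_m(p) = 0}` (vanishing tested on
representatives). -/
def Zset {m : ℕ} (q : Fin m → MvPolynomial ((i : Fin s) × Fin (n i)) k) :
    Set ((i : Fin s) → Projectivization k (Fin (n i) → k)) :=
  {z | ∃ x, ∃ hx : x ∈ Uset k n, x ∈ Cset k n q ∧ toProj k n x hx = z}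

/-- The Zariski topology on affine space `σ → K`. -/
instance zariskiTopology (σ K : Type*) [CommSemiring K] : TopologicalSpace (σ → K) :=
  TopologicalSpace.generateFrom {U | ∃ p : MvPolynomial σ K, U = {x | eval x p ≠ 0}}

lemma exists_basic {σ : Type*} (o : Set (σ → k))
    (ho : TopologicalSpace.GenerateOpen
      {U | ∃ p : MvPolynomial σ k, U = {x | eval x p ≠ 0}} o)
    (v : σ → k) (hv : v ∈ o) :
    ∃ p : MvPolynomial σ k, eval v p ≠ 0 ∧ ∀ x, eval x p ≠ 0 → x ∈ o := by
  induction ho with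
  | basic u hu =>
    obtain ⟨p, rfl⟩ := hu
    exact ⟨p, hv, fun x hx => hx⟩
  | univ => exact ⟨1, by simp, fun x _ => trivial⟩
  | inter o₁ o₂ h₁ h₂ ih₁ ih₂ =>
    obtain ⟨p₁, hp₁, hs₁⟩ := ih₁ hv.1
    obtain ⟨p₂, hp₂, hs₂⟩ := ih₂ hv.2
    refine ⟨p₁ * p₂, by simp [hp₁, hp₂], fun x hx => ?_⟩
    rw [map_mul] at hx
    exact ⟨hs₁ x (left_ne_zero_of_mul hx), hs₂ x (right_ne_zero_of_mul hx)⟩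
  | sUnion S hS ih =>
    obtain ⟨u, huS, hvu⟩ := hv
    obtain ⟨p, hp, hs⟩ := ih u huS hvu
    exact ⟨p, hp, fun x hx => ⟨u, huS, hs x hx⟩⟩

lemma eval_family {σ : Type*} (g : σ → Polynomial k)
    (p : MvPolynomial σ k) (τ : k) :
    Polynomial.eval τ (MvPolynomial.aeval g p) =
      MvPolynomial.eval (fun s => Polynomial.eval τ (g s)) p := by
  have h := MvPolynomial.comp_aeval_apply (f := g) (Polynomial.aeval τ) p
  simp only [Polynomial.coe_aeval_eq_eval] at h
  rw [h, ← MvPolynomial.coe_aeval_eq_eval]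
  rfl

lemma key [CharZero k] (hn : ∀ i, 0 < n i) {m : ℕ}
    (q : Fin m → MvPolynomial ((i : Fin s) × Fin (n i)) k)
    (d : Fin m → Fin s → ℕ) (hq : ∀ j, IsMultiHom k n (q j) (d j))
    (hsurj : ∀ i : Fin s, ∀ p : (j : Fin s) → Projectivization k (Fin (n j) → k),
      ∃ z ∈ Zset k n q, ∀ j, j ≠ i → z j = p j)
    (v : ((i : Fin s) × Fin (n i)) → k) (hv : v ∈ Dset k n)
    (p : MvPolynomial ((i : Fin s) × Fin (n i)) k) (hp : eval v p ≠ 0) :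
    ∃ x ∈ Cset k n q ∩ Uset k n, eval x p ≠ 0 := by
  classical
  obtain ⟨i, hvi⟩ := hv
  -- Step 1: perturb v so that all components other than i are nonzero
  set w : k → (((j : Fin s) × Fin (n j)) → k) :=
    fun τ pr => if pr.1 = i then 0 else v pr + τ with hw
  set G₁ : Polynomial k :=
    MvPolynomial.aeval
      (fun pr : (j : Fin s) × Fin (n j) =>
        if pr.1 = i then 0 else Polynomial.C (v pr) + Polynomial.X) p with hG₁
  have hG₁eval : ∀ τ : k, Polynomial.eval τ G₁ = eval (w τ) p := by
    intro τ
    rw [hG₁, eval_family]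
    have : (fun pr : (j : Fin s) × Fin (n j) =>
        Polynomial.eval τ (if pr.1 = i then 0 else Polynomial.C (v pr) + Polynomial.X)) = w τ := by
      funext pr
      by_cases h : pr.1 = i <;> simp [hw, h]
    rw [this]
  have hw0 : w 0 = v := by
    funext pr
    obtain ⟨j, a⟩ := pr
    by_cases h : j = i
    · subst h
      simpa [hw, comp] using (congrFun hvi a).symm
    · simp [hw, h]
  have hG₁ne : G₁ ≠ 0 := by
    intro h
    apply hp
    rw [← hw0, ← hG₁eval 0, h, Polynomial.eval_zero]
  obtain ⟨τ₁, hτ₁⟩ := Infinite.exists_notMem_finset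
    (G₁.roots.toFinset ∪ Finset.image (fun pr => -v pr) Finset.univ)
  simp only [Finset.mem_union, Multiset.mem_toFinset, Finset.mem_image,
    Finset.mem_univ, true_and, not_or, not_exists] at hτ₁
  have hv'p : eval (w τ₁) p ≠ 0 := by
    rw [← hG₁eval]
    intro h
    exact hτ₁.1 ((Polynomial.mem_roots hG₁ne).mpr h)
  have hv'i : comp k n (w τ₁) i = 0 := by
    funext a; simp [comp, hw]
  have hv'j : ∀ j, j ≠ i → comp k n (w τ₁) j ≠ 0 := by
    intro j hj h
    have := congrFun h ⟨0, hn j⟩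
    simp [comp, hw, hj] at this
    exact hτ₁.2 ⟨j, ⟨0, hn j⟩⟩ (neg_eq_of_add_eq_zero_right this)
  set v' := w τ₁ with hv'def
  -- Step 2: find x ∈ C ∩ U matching v' projectively away from i
  have hune : ∀ j : Fin s, (fun _ : Fin (n j) => (1:k)) ≠ 0 := by
    intro j h
    exact one_ne_zero (congrFun h ⟨0, hn j⟩)
  set pt : (j : Fin s) → Projectivization k (Fin (n j) → k) := fun j =>
    if h : j = i then Projectivization.mk k (fun _ => (1:k)) (hune j)
    else Projectivization.mk k (comp k n v' j) (hv'j j h) with hpt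
  obtain ⟨z, hzZ, hzj⟩ := hsurj i pt
  obtain ⟨x, hxU, hxC, hxproj⟩ := hzZ
  have hax : ∀ j, j ≠ i → ∃ a : kˣ, a • comp k n v' j = comp k n x j := by
    intro j hj
    have h1 : toProj k n x hxU j = pt j := by rw [hxproj]; exact hzj j hj
    rw [hpt] at h1
    simp only [toProj, dif_neg hj] at h1
    exact (Projectivization.mk_eq_mk_iff k _ _ _ _).mp h1
  choose a ha using hax
  set c : Fin s → k := fun j => if h : j = i then 1 else ((a j h : kˣ) : k)⁻¹ with hc
  have hcne : ∀ j, c j ≠ 0 := by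
    intro j
    rw [hc]
    dsimp only
    split
    · exact one_ne_zero
    · exact inv_ne_zero (Units.ne_zero _)
  -- Step 3: rescale x, generic scaling parameter on the i-th factor
  set y : k → (((j : Fin s) × Fin (n j)) → k) :=
    fun τ => scale k n (fun j => if j = i then τ else c j) x with hy
  set G₂ : Polynomial k :=
    MvPolynomial.aeval
      (fun pr : (j : Fin s) × Fin (n j) =>
        (if pr.1 = i then Polynomial.X else Polynomial.C (c pr.1)) * Polynomial.C (x pr)) p
    with hG₂
  have hG₂eval : ∀ τ : k, Polynomial.eval τ G₂ = eval (y τ) p := by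
    intro τ
    rw [hG₂, eval_family]
    have : (fun pr : (j : Fin s) × Fin (n j) =>
        Polynomial.eval τ ((if pr.1 = i then Polynomial.X else Polynomial.C (c pr.1))
          * Polynomial.C (x pr))) = y τ := by
      funext pr
      by_cases h : pr.1 = i <;> simp [hy, scale, h] <;> ring
    rw [this]
  have hy0 : y 0 = v' := by
    funext pr
    obtain ⟨j, b⟩ := pr
    by_cases h : j = i
    · subst h
      have h0 : v' ⟨j, b⟩ = 0 := congrFun hv'i b
      simp [hy, scale, h0]
    · have h2 := congrFun (ha j h) b
      simp only [Pi.smul_apply, Units.smul_def, smul_eq_mul, comp] at h2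
      have : (y 0) ⟨j, b⟩ = ((a j h : kˣ) : k)⁻¹ * x ⟨j, b⟩ := by
        simp [hy, scale, h, hc]
      rw [this, ← h2, inv_mul_cancel_left₀ (Units.ne_zero _)]
  have hG₂ne : G₂ ≠ 0 := by
    intro h
    apply hv'p
    rw [← hy0, ← hG₂eval 0, h, Polynomial.eval_zero]
  obtain ⟨τ₂, hτ₂⟩ := Infinite.exists_notMem_finset (G₂.roots.toFinset ∪ {0})
  simp only [Finset.mem_union, Multiset.mem_toFinset, Finset.mem_singleton, not_or] at hτ₂
  have ht : ∀ j, (if j = i then τ₂ else c j) ≠ 0 := by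
    intro j
    split
    · exact hτ₂.2
    · exact hcne j
  refine ⟨y τ₂, ⟨?_, ?_⟩, ?_⟩
  · intro j
    show eval (scale k n _ x) (q j) = 0
    rw [hq j _ ht x, hxC j, mul_zero]
  · intro hD
    obtain ⟨j, hj⟩ := hD
    apply hxU
    refine ⟨j, funext fun b => ?_⟩
    have hb := congrFun hj b
    simp only [comp, hy, scale] at hb
    exact (mul_eq_zero.mp hb).resolve_left (ht j)
  · rw [← hG₂eval]
    intro h
    exact hτ₂.1 ((Polynomial.mem_roots hG₂ne).mpr h)


/-- **Proposition.** If for every `i` the natural projection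
`Z → ℙ(V₁) × ⋯ × ℙ(V_i)^∧ × ⋯ × ℙ(V_s)` (omitting the `i`-th factor) is surjective,
then `D ⊆ cl(C ∩ U)`, the Zariski closure of `C ∩ U` in `V`. -/
theorem Dset_subset_closure [IsAlgClosed k] [CharZero k]
    (hs : 2 ≤ s) (hn : ∀ i, 0 < n i) {m : ℕ}
    (q : Fin m → MvPolynomial ((i : Fin s) × Fin (n i)) k)
    (d : Fin m → Fin s → ℕ) (hq : ∀ j, IsMultiHom k n (q j) (d j))
    (hd : ∀ j i, 0 < d j i)
    (hsurj : ∀ i : Fin s, ∀ p : (j : Fin s) → Projectivization k (Fin (n j) → k),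
      ∃ z ∈ Zset k n q, ∀ j, j ≠ i → z j = p j) :
    Dset k n ⊆ closure (Cset k n q ∩ Uset k n) := by
  intro v hv
  rw [mem_closure_iff]
  intro o ho hvo
  have ho' : TopologicalSpace.GenerateOpen
      {U | ∃ p : MvPolynomial ((i : Fin s) × Fin (n i)) k, U = {x | eval x p ≠ 0}} o := ho
  obtain ⟨p, hpv, hsub⟩ := exists_basic k o ho' v hvo
  obtain ⟨x, hx, hxp⟩ := key k n hn q d hq hsurj v hv p hpv
  exact ⟨x, hsub x hxp, hx⟩

end
end

section
/- If Z has the property that for every i = 1,…,s the natural projection Z → P(V_1)×⋯×P(V_i)^∧×⋯×P(V_s) (omitting the i-th factor) is surjective, then C equals the Zariski closure of C ∩ U in V. -/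
noncomputable section

open MvPolynomial

variable (k : Type) [Field k] {s : ℕ} (n : Fin s → ℕ)

lemma zariski_basis (σ K : Type*) [CommRing K] [IsDomain K] :
    TopologicalSpace.IsTopologicalBasis
      {U : Set (σ → K) | ∃ p : MvPolynomial σ K, U = {x | eval x p ≠ 0}} := by
  refine ⟨?_, ?_, rfl⟩
  · rintro t₁ ⟨p, rfl⟩ t₂ ⟨r, rfl⟩ x hx
    refine ⟨{x | eval x (p * r) ≠ 0}, ⟨p * r, rfl⟩, ?_, ?_⟩
    · simpa using mul_ne_zero hx.1 hx.2
    · intro z hz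
      simp only [Set.mem_setOf_eq, map_mul] at hz ⊢
      exact ⟨left_ne_zero_of_mul hz, right_ne_zero_of_mul hz⟩
  · refine Set.eq_univ_of_forall fun x => ?_
    exact ⟨{x | eval x 1 ≠ 0}, ⟨1, rfl⟩, by simp⟩

/-- **Corollary.** If for every `i` the natural projection
`Z → ℙ(V₁) × ⋯ × ℙ(V_i)^∧ × ⋯ × ℙ(V_s)` (omitting the `i`-th factor) is surjective,
then `C` equals the Zariski closure of `C ∩ U` in `V`. -/
theorem cone_eq_closure [IsAlgClosed k] [CharZero k]
    (hs : 2 ≤ s) (hn : ∀ i, 0 < n i) {m : ℕ}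
    (q : Fin m → MvPolynomial ((i : Fin s) × Fin (n i)) k)
    (d : Fin m → Fin s → ℕ) (hq : ∀ j, IsMultiHom k n (q j) (d j))
    (hd : ∀ j i, 0 < d j i)
    (hsurj : ∀ i : Fin s, ∀ p : (j : Fin s) → Projectivization k (Fin (n j) → k),
      ∃ z ∈ Zset k n q, ∀ j, j ≠ i → z j = p j) :
    Cset k n q = closure (Cset k n q ∩ Uset k n) := by
  classical
  have hCclosed : IsClosed (Cset k n q) := by
    have hC : Cset k n q = ⋂ j, {x | eval x (q j) = 0} := by
      ext x; simp [Cset]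
    rw [hC]
    refine isClosed_iInter fun j => ⟨?_⟩
    exact TopologicalSpace.GenerateOpen.basic _ ⟨q j, rfl⟩
  refine Set.Subset.antisymm ?_ (closure_minimal Set.inter_subset_left hCclosed)
  intro x hxC
  -- Step 1: find y ∈ C ∩ U and t with x = scale t y
  obtain ⟨y, hyC, hyU, t, hxt⟩ :
      ∃ y, y ∈ Cset k n q ∧ y ∈ Uset k n ∧ ∃ t : Fin s → k, x = scale k n t y := by
    by_cases hxU : x ∈ Uset k n
    · exact ⟨x, hxC, hxU, 1, by funext p; simp [scale]⟩
    · have hxD : ∃ i, comp k n x i = 0 := not_not.mp hxU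
      obtain ⟨i, hi⟩ := hxD
      have hone : ∀ j : Fin s, (fun _ : Fin (n j) => (1 : k)) ≠ 0 := by
        intro j h
        exact one_ne_zero (congrFun h ⟨0, hn j⟩)
      set p : (j : Fin s) → Projectivization k (Fin (n j) → k) := fun j =>
        if h : comp k n x j = 0 then Projectivization.mk k (fun _ => 1) (hone j)
        else Projectivization.mk k (comp k n x j) h with hp
      obtain ⟨z, ⟨y, hyU, hyC, hyz⟩, hz⟩ := hsurj i p
      have key : ∀ j, ∀ hj : comp k n x j ≠ 0, ∃ c : kˣ,
          comp k n y j = c • comp k n x j := by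
        intro j hj
        have hji : j ≠ i := by rintro rfl; exact hj hi
        have h1 : toProj k n y hyU j = p j := by rw [hyz]; exact hz j hji
        have h2 : p j = Projectivization.mk k (comp k n x j) hj := dif_neg hj
        rw [h2] at h1
        rw [toProj, Projectivization.mk_eq_mk_iff] at h1
        obtain ⟨c, hc⟩ := h1
        exact ⟨c, hc.symm⟩
      choose c hc using key
      refine ⟨y, hyC, hyU,
        fun j => if h : comp k n x j = 0 then 0 else ((c j h : kˣ) : k)⁻¹, ?_⟩
      funext pt
      obtain ⟨j, a⟩ := pt
      show x ⟨j, a⟩ = (if h : comp k n x j = 0 then (0 : k)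
        else ((c j h : kˣ) : k)⁻¹) * y ⟨j, a⟩
      by_cases h : comp k n x j = 0
      · have : x ⟨j, a⟩ = 0 := congrFun h a
        simp [this, h]
      · have hy : y ⟨j, a⟩ = (c j h : k) * x ⟨j, a⟩ := congrFun (hc j h) a
        rw [dif_neg h, hy, ← mul_assoc, inv_mul_cancel₀ (Units.ne_zero _), one_mul]
  -- Step 2: density of the torus orbit
  rw [(zariski_basis _ k).mem_closure_iff]
  rintro o ⟨g, rfl⟩ hxo
  set φ : ((i : Fin s) × Fin (n i)) → MvPolynomial (Fin s) k :=
    fun p => X p.1 * MvPolynomial.C (y p) with hφ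
  set h : MvPolynomial (Fin s) k := eval₂ MvPolynomial.C φ g with hh
  have hevalh : ∀ t' : Fin s → k, eval t' h = eval (scale k n t' y) g := by
    intro t'
    rw [hh, eval₂_comp_left (eval t') MvPolynomial.C φ g]
    have h1 : (eval t').comp (MvPolynomial.C (σ := Fin s)) = RingHom.id k := by
      ext c; simp
    have h2 : (eval t') ∘ φ = scale k n t' y := by
      funext p; simp [hφ, scale]
    rw [h1, h2]
    rfl
  have hh0 : h ≠ 0 := by
    intro h0
    apply hxo
    have := hevalh t
    rw [h0, ← hxt, map_zero] at this
    exact this.symm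
  have hXprod : (∏ i : Fin s, (X i : MvPolynomial (Fin s) k)) ≠ 0 :=
    Finset.prod_ne_zero_iff.mpr fun i _ => X_ne_zero i
  have hprod : h * ∏ i : Fin s, (X i : MvPolynomial (Fin s) k) ≠ 0 :=
    mul_ne_zero hh0 hXprod
  have hex : ∃ t' : Fin s → k,
      eval t' (h * ∏ i : Fin s, (X i : MvPolynomial (Fin s) k)) ≠ 0 := by
    by_contra hcon
    push_neg at hcon
    exact hprod (MvPolynomial.funext fun t' => by simpa using hcon t')
  obtain ⟨t', ht'⟩ := hex
  rw [map_mul] at ht'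
  have ht'1 : eval t' h ≠ 0 := left_ne_zero_of_mul ht'
  have ht'2 : ∀ i, t' i ≠ 0 := by
    have := right_ne_zero_of_mul ht'
    rw [map_prod] at this
    intro i
    have := Finset.prod_ne_zero_iff.mp this i (Finset.mem_univ i)
    simpa using this
  refine ⟨scale k n t' y, ?_, ?_, ?_⟩
  · show eval (scale k n t' y) g ≠ 0
    rw [← hevalh]; exact ht'1
  · intro j
    rw [hq j t' ht'2 y, hyC j, mul_zero]
  · intro hD
    obtain ⟨i, hi0⟩ := hD
    apply hyU
    refine ⟨i, funext fun a => ?_⟩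
    have := congrFun hi0 a
    simp only [comp, scale] at this ⊢
    exact (mul_eq_zero.mp this).resolve_left (ht'2 i)


end
end

section
/- If Z has the property that for every i = 1,…,s the natural projection Z → P(V_1)×⋯×P(V_i)^∧×⋯×P(V_s) (omitting the i-th factor) is surjective, then the multi-cone C is irreducible if and only if C ∩ U is irreducible. -/
noncomputable section

open MvPolynomial

variable (k : Type) [Field k] {s : ℕ} (n : Fin s → ℕ)

lemma mem_zclosure_iff {σ K : Type*} [CommRing K] [IsDomain K] {S : Set (σ → K)} {x : σ → K} :
    x ∈ closure S ↔ ∀ p : MvPolynomial σ K, eval x p ≠ 0 → ∃ y ∈ S, eval y p ≠ 0 := by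
  rw [(zariski_basis σ K).mem_closure_iff]
  constructor
  · intro h p hp
    obtain ⟨y, hy1, hy2⟩ := h {z | eval z p ≠ 0} ⟨p, rfl⟩ hp
    exact ⟨y, hy2, hy1⟩
  · rintro h o ⟨p, rfl⟩ hx
    obtain ⟨y, hy, hyp⟩ := h p hx
    exact ⟨y, hyp, hy⟩

lemma isIrreducible_iff_of_subset_closure {X : Type*} [TopologicalSpace X] {s t : Set X}
    (hst : s ⊆ t) (htc : t ⊆ closure s) : IsIrreducible t ↔ IsIrreducible s := by
  constructor
  · rintro ⟨⟨x, hx⟩, hpre⟩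
    have hs : s.Nonempty := by
      by_contra h
      rw [Set.not_nonempty_iff_eq_empty] at h
      have := htc hx
      rw [h, closure_empty] at this
      exact this
    refine ⟨hs, fun u v hu hv ⟨p, hps, hpu⟩ ⟨r, hrs, hrv⟩ => ?_⟩
    obtain ⟨z, hzt, hzu, hzv⟩ := hpre u v hu hv ⟨p, hst hps, hpu⟩ ⟨r, hst hrs, hrv⟩
    obtain ⟨w, hw1, hw2⟩ := _root_.mem_closure_iff.mp (htc hzt) (u ∩ v) (hu.inter hv) ⟨hzu, hzv⟩
    exact ⟨w, hw2, hw1⟩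
  · rintro ⟨⟨x, hx⟩, hpre⟩
    refine ⟨⟨x, hst hx⟩, fun u v hu hv ⟨p, hpt, hpu⟩ ⟨r, hrt, hrv⟩ => ?_⟩
    obtain ⟨p', hp1, hp2⟩ := _root_.mem_closure_iff.mp (htc hpt) u hu hpu
    obtain ⟨r', hr1, hr2⟩ := _root_.mem_closure_iff.mp (htc hrt) v hv hrv
    obtain ⟨z, hzs, hzu, hzv⟩ := hpre u v hu hv ⟨p', hp2, hp1⟩ ⟨r', hr2, hr1⟩
    exact ⟨z, hst hzs, hzu, hzv⟩


/-- **Corollary.** If for every `i` the natural projection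
`Z → ℙ(V₁) × ⋯ × ℙ(V_i)^∧ × ⋯ × ℙ(V_s)` (omitting the `i`-th factor) is surjective,
then the multi-cone `C` is irreducible if and only if `C ∩ U` is irreducible. -/
theorem cone_irreducible_iff [IsAlgClosed k] [CharZero k]
    (hs : 2 ≤ s) (hn : ∀ i, 0 < n i) {m : ℕ}
    (q : Fin m → MvPolynomial ((i : Fin s) × Fin (n i)) k)
    (d : Fin m → Fin s → ℕ) (hq : ∀ j, IsMultiHom k n (q j) (d j))
    (hd : ∀ j i, 0 < d j i)
    (hsurj : ∀ i : Fin s, ∀ p : (j : Fin s) → Projectivization k (Fin (n j) → k),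
      ∃ z ∈ Zset k n q, ∀ j, j ≠ i → z j = p j) :
    IsIrreducible (Cset k n q) ↔ IsIrreducible (Cset k n q ∩ Uset k n) := by
  classical
  refine isIrreducible_iff_of_subset_closure Set.inter_subset_left ?_
  intro x hxC
  by_cases hxU : x ∈ Uset k n
  · exact subset_closure ⟨hxC, hxU⟩
  have hxD : x ∈ Dset k n := not_not.mp hxU
  obtain ⟨i0, hi0⟩ := hxD
  have hone : ∀ j : Fin s, (fun _ : Fin (n j) => (1 : k)) ≠ 0 := by
    intro j h
    exact one_ne_zero (congrFun h ⟨0, hn j⟩)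
  set p : (j : Fin s) → Projectivization k (Fin (n j) → k) := fun j =>
    if h : comp k n x j = 0 then Projectivization.mk k (fun _ => 1) (hone j)
    else Projectivization.mk k (comp k n x j) h with hp
  obtain ⟨z, hzZ, hz⟩ := hsurj i0 p
  obtain ⟨y, hyU, hyC, hyz⟩ := hzZ
  have hyne : ∀ i, comp k n y i ≠ 0 := by
    intro i hi
    exact hyU ⟨i, hi⟩
  have hyx : ∀ j, ∃ a : kˣ, comp k n x j ≠ 0 → (a : k) • comp k n x j = comp k n y j := by
    intro j
    by_cases h : comp k n x j = 0
    · exact ⟨1, fun h' => absurd h h'⟩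
    · have hji : j ≠ i0 := fun e => h (e ▸ hi0)
      have h2 : toProj k n y hyU j = Projectivization.mk k (comp k n x j) h := by
        rw [hyz, hz j hji, hp]
        simp [h]
      have h3 : Projectivization.mk k (comp k n y j) (hyne j)
          = Projectivization.mk k (comp k n x j) h := h2
      rw [Projectivization.mk_eq_mk_iff] at h3
      obtain ⟨a, ha⟩ := h3
      exact ⟨a, fun _ => ha⟩
  choose a ha using hyx
  set t : k → Fin s → k := fun u j => if comp k n x j = 0 then u else (((a j)⁻¹ : kˣ) : k)
    with ht
  -- scale (t u) y for u ≠ 0 lies in C ∩ U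
  have hmem : ∀ u : k, u ≠ 0 → scale k n (t u) y ∈ Cset k n q ∩ Uset k n := by
    intro u hu
    have htne : ∀ i, t u i ≠ 0 := by
      intro i
      by_cases h : comp k n x i = 0 <;> simp [ht, h, hu]
    constructor
    · intro j
      rw [hq j (t u) htne y, hyC j, mul_zero]
    · intro hD
      obtain ⟨i, hi⟩ := hD
      apply hyne i
      funext b
      have := congrFun hi b
      simp only [comp, scale] at this ⊢
      exact (mul_eq_zero.mp this).resolve_left (htne i)
  -- scale (t 0) y = x
  have hzero : scale k n (t 0) y = x := by
    funext pt
    obtain ⟨j, b⟩ := pt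
    by_cases h : comp k n x j = 0
    · have : x ⟨j, b⟩ = 0 := congrFun h b
      simp [scale, ht, h, this]
    · have hy : y ⟨j, b⟩ = (a j : k) * x ⟨j, b⟩ := by
        have := congrFun (ha j h) b
        simpa [comp] using this.symm
      simp only [scale, ht, if_neg h, hy]
      rw [← mul_assoc]
      simp
  rw [mem_zclosure_iff]
  intro f hf
  -- build the one-variable polynomial G with G.eval u = eval (scale (t u) y) f
  set σf : ((i : Fin s) × Fin (n i)) → Polynomial k := fun pt =>
    if comp k n x pt.1 = 0 then Polynomial.C (y pt) * Polynomial.X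
    else Polynomial.C ((((a pt.1)⁻¹ : kˣ) : k) * y pt) with hσf
  set G : Polynomial k := MvPolynomial.eval₂ Polynomial.C σf f with hG
  have hidC : ∀ u : k, (Polynomial.evalRingHom u).comp Polynomial.C = RingHom.id k :=
    fun u => RingHom.ext fun r => Polynomial.eval_C
  have hGeval : ∀ u : k, G.eval u = eval (scale k n (t u) y) f := by
    intro u
    have h1 := MvPolynomial.eval₂_comp_left (Polynomial.evalRingHom u)
      (Polynomial.C : k →+* Polynomial k) σf f
    have h2 : (⇑(Polynomial.evalRingHom u) ∘ σf) = scale k n (t u) y := by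
      funext pt
      show Polynomial.eval u (σf pt) = t u pt.1 * y pt
      simp only [hσf, ht]
      by_cases h : comp k n x pt.1 = 0
      · rw [if_pos h, if_pos h, Polynomial.eval_mul, Polynomial.eval_C, Polynomial.eval_X,
          mul_comm]
      · rw [if_neg h, if_neg h, Polynomial.eval_C]
    rw [hidC u, h2, MvPolynomial.eval₂_id] at h1
    exact h1
  have h0 : G.eval 0 ≠ 0 := by
    rw [hGeval 0, hzero]
    exact hf
  have hGne : G ≠ 0 := fun h => h0 (by rw [h]; simp)
  -- find u ≠ 0 with G.eval u ≠ 0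
  have : ∃ u : k, u ≠ 0 ∧ G.eval u ≠ 0 := by
    by_contra hcon
    push_neg at hcon
    have hGX : G * Polynomial.X = 0 := by
      apply Polynomial.zero_of_eval_zero
      intro u
      by_cases hu : u = 0
      · simp [hu]
      · simp [hcon u hu]
    rcases mul_eq_zero.mp hGX with h | h
    · exact hGne h
    · exact Polynomial.X_ne_zero h
  obtain ⟨u, hu, hGu⟩ := this
  refine ⟨scale k n (t u) y, hmem u hu, ?_⟩
  rw [← hGeval u]
  exact hGu


end
end

section
/- Suppose that: (a) Z is irreducible; (b) for every i = 1,…,s the natural projection Z → P(V_1)×⋯×P(V_i)^∧×⋯×P(V_s) (omitting the i-th factor) is surjective; (c) dim Z = dim V − s − m. Then the multi-cone C is irreducible. -/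
noncomputable section

open MvPolynomial

variable (k : Type) [Field k] {s : ℕ} (n : Fin s → ℕ)

/-- The Zariski topology on `ℙ(V₁) × ⋯ × ℙ(V_s)`: the quotient topology induced from
the Zariski topology on `U ⊆ V` along `π_{V₁} × ⋯ × π_{V_s}`. -/
instance : TopologicalSpace ((i : Fin s) → Projectivization k (Fin (n i) → k)) :=
  TopologicalSpace.coinduced (fun u : (Uset k n) => toProj k n u.1 u.2) inferInstance

/-! ### Auxiliary lemmas -/

lemma eval_bind' {K : Type*} [CommSemiring K] {σ τ : Type*} (g : σ → MvPolynomial τ K)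
    (x : τ → K) (p : MvPolynomial σ K) :
    eval x (bind₁ g p) = eval (fun i => eval x (g i)) p := by
  show eval₂Hom (RingHom.id K) x (bind₁ g p) = _
  rw [eval₂Hom_bind₁]; rfl

lemma exists_eval_ne {K : Type*} [CommRing K] [IsDomain K] [Infinite K] {σ : Type*}
    {p : MvPolynomial σ K} (hp : p ≠ 0) : ∃ x, eval x p ≠ 0 := by
  by_contra h
  push_neg at h
  exact hp (MvPolynomial.funext fun x => by simp [h x])

lemma isOpen_basic {σ K : Type*} [CommSemiring K] (p : MvPolynomial σ K) :
    IsOpen {x : σ → K | eval x p ≠ 0} :=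
  TopologicalSpace.GenerateOpen.basic _ ⟨p, rfl⟩

lemma exists_basic_s9 {σ K : Type*} [CommSemiring K] [Nontrivial K] [NoZeroDivisors K]
    {O : Set (σ → K)} (hO : IsOpen O) :
    ∀ x ∈ O, ∃ p : MvPolynomial σ K, eval x p ≠ 0 ∧ ∀ y : σ → K, eval y p ≠ 0 → y ∈ O := by
  have hO' : TopologicalSpace.GenerateOpen
      {U | ∃ p : MvPolynomial σ K, U = {x | eval x p ≠ 0}} O := hO
  clear hO
  induction hO' with
  | basic u hu =>
    obtain ⟨p, rfl⟩ := hu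
    exact fun x hx => ⟨p, hx, fun y hy => hy⟩
  | univ => exact fun x _ => ⟨1, by simp, fun y _ => trivial⟩
  | inter u v _ _ ihu ihv =>
    intro x hx
    obtain ⟨p, hp, hpu⟩ := ihu x hx.1
    obtain ⟨r, hr, hrv⟩ := ihv x hx.2
    refine ⟨p * r, by rw [map_mul]; exact mul_ne_zero hp hr, fun y hy => ?_⟩
    rw [map_mul] at hy
    exact ⟨hpu y (left_ne_zero_of_mul hy), hrv y (right_ne_zero_of_mul hy)⟩
  | sUnion S _ ih =>
    rintro x ⟨u, hu, hx⟩
    obtain ⟨p, hp, hpu⟩ := ih u hu x hx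
    exact ⟨p, hp, fun y hy => ⟨u, hu, hpu y hy⟩⟩

lemma mem_closure_of_basic {σ K : Type*} [CommSemiring K] [Nontrivial K] [NoZeroDivisors K]
    {S : Set (σ → K)} {x : σ → K}
    (h : ∀ p : MvPolynomial σ K, eval x p ≠ 0 → ∃ y ∈ S, eval y p ≠ 0) : x ∈ closure S := by
  rw [mem_closure_iff]
  intro O hO hx
  obtain ⟨p, hp, hpO⟩ := exists_basic_s9 hO x hx
  obtain ⟨y, hyS, hyp⟩ := h p hp
  exact ⟨y, hpO y hyp, hyS⟩

/-- Scaling by a tuple of nonzero scalars preserves `U`. -/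
lemma scale_mem_U {t : Fin s → k} (ht : ∀ i, t i ≠ 0)
    {x : ((i : Fin s) × Fin (n i)) → k} (hx : x ∈ Uset k n) :
    scale k n t x ∈ Uset k n := by
  rintro ⟨i, hi⟩
  refine hx ⟨i, funext fun b => ?_⟩
  have := congrFun hi b
  simp only [comp, scale, Pi.zero_apply] at this ⊢
  exact (mul_eq_zero.1 this).resolve_left (ht i)

/-- The evaluation of `q` at `scale t x` is the evaluation of `x` at a substituted polynomial. -/
lemma eval_scale_eq (t : Fin s → k) (x : ((i : Fin s) × Fin (n i)) → k)
    (p : MvPolynomial ((i : Fin s) × Fin (n i)) k) :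
    eval x (bind₁ (fun v : (i : Fin s) × Fin (n i) =>
      (C (t v.1) * X v : MvPolynomial ((i : Fin s) × Fin (n i)) k)) p)
      = eval (scale k n t x) p := by
  rw [eval_bind']
  have h : (fun v : (i : Fin s) × Fin (n i) =>
      eval x ((C (t v.1) * X v : MvPolynomial ((i : Fin s) × Fin (n i)) k))) = scale k n t x :=
    funext fun v => by simp [scale]
  rw [h]

/-- Scaling preserves the projection to the product of projectivizations. -/
lemma toProj_scale {t : Fin s → k} (ht : ∀ i, t i ≠ 0)
    {x : ((i : Fin s) × Fin (n i)) → k} (hx : x ∈ Uset k n)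
    (h' : scale k n t x ∈ Uset k n) :
    toProj k n (scale k n t x) h' = toProj k n x hx := by
  funext i
  refine (Projectivization.mk_eq_mk_iff k _ _ _ _).2 ⟨Units.mk0 (t i) (ht i), funext fun b => ?_⟩
  simp [comp, scale, Units.smul_def]

/-- If two points of `U` have the same projection, one is a scaling of the other. -/
lemma toProj_eq_imp {x v : ((i : Fin s) × Fin (n i)) → k}
    (hx : x ∈ Uset k n) (hv : v ∈ Uset k n)
    (h : toProj k n v hv = toProj k n x hx) :
    ∃ t : Fin s → k, (∀ i, t i ≠ 0) ∧ v = scale k n t x := by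
  have h' : ∀ i, ∃ a : kˣ, a • comp k n x i = comp k n v i := fun i =>
    (Projectivization.mk_eq_mk_iff k _ _ _ _).1 (congrFun h i)
  choose a ha using h'
  refine ⟨fun i => a i, fun i => (a i).ne_zero, funext fun vv => ?_⟩
  have := congrFun (ha vv.1) vv.2
  simp only [Pi.smul_apply, Units.smul_def, smul_eq_mul, comp] at this
  simpa [scale] using this.symm
/-- **Corollary.** If `Z` is irreducible, every projection of `Z` omitting one factor is
surjective, and `dim Z = dim V − s − m`, then the multi-cone `C` is irreducible. -/
theorem cone_irreducible [IsAlgClosed k] [CharZero k]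
    (hs : 2 ≤ s) (hn : ∀ i, 0 < n i) {m : ℕ}
    (q : Fin m → MvPolynomial ((i : Fin s) × Fin (n i)) k)
    (d : Fin m → Fin s → ℕ) (hq : ∀ j, IsMultiHom k n (q j) (d j))
    (hd : ∀ j i, 0 < d j i)
    (hZirr : IsIrreducible (Zset k n q))
    (hsurj : ∀ i : Fin s, ∀ p : (j : Fin s) → Projectivization k (Fin (n j) → k),
      ∃ z ∈ Zset k n q, ∀ j, j ≠ i → z j = p j)
    (hZdim : topologicalKrullDim (Zset k n q) = ((∑ i, n i) - s - m : ℕ)) :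
    IsIrreducible (Cset k n q) := by
  classical
  -- scaling by nonzero scalars preserves `C`
  have scale_mem_C : ∀ {t : Fin s → k}, (∀ i, t i ≠ 0) →
      ∀ {x : ((i : Fin s) × Fin (n i)) → k}, x ∈ Cset k n q → scale k n t x ∈ Cset k n q := by
    intro t ht x hx j
    rw [hq j t ht x, hx j, mul_zero]
  -- `D ⊆ C` : each `q j` vanishes whenever some component vanishes
  have hDC : Dset k n ⊆ Cset k n q := by
    rintro x ⟨i, hi⟩ j
    set t : Fin s → k := fun j' => if j' = i then 2 else 1 with htdef
    have ht : ∀ i', t i' ≠ 0 := by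
      intro i'; simp only [htdef]; split <;> norm_num
    have hsx : scale k n t x = x := by
      funext vv
      rcases vv with ⟨j', b⟩
      by_cases h : j' = i
      · subst h
        have : x ⟨j', b⟩ = 0 := congrFun hi b
        simp [scale, this]
      · simp [scale, htdef, h]
    have hmain := hq j t ht x
    rw [hsx] at hmain
    have hprod : (∏ i', t i' ^ d j i') = 2 ^ d j i := by
      rw [Finset.prod_eq_single_of_mem i (Finset.mem_univ i)
        (fun b _ hb => by simp [htdef, hb])]
      simp [htdef]
    rw [hprod] at hmain
    have h2 : (2 : k) ^ d j i ≠ 1 := by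
      intro h
      have : ((2 ^ d j i : ℕ) : k) = ((1 : ℕ) : k) := by push_cast; simpa using h
      have h0 := Nat.cast_injective (R := k) this
      have h1 : 1 < 2 ^ d j i := Nat.one_lt_two_pow_iff.2 (hd j i).ne'
      omega
    by_contra hne
    field_simp at hmain
    exact h2 hmain.symm
  -- `S = C ∩ U`
  set S : Set (((i : Fin s) × Fin (n i)) → k) := Cset k n q ∩ Uset k n with hSdef
  obtain ⟨z0, x0, hx0U, hx0C, _⟩ := hZirr.1
  have hSne : S.Nonempty := ⟨x0, hx0C, hx0U⟩
  -- saturated open sets downstairs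
  set f : (Uset k n) → ((i : Fin s) → Projectivization k (Fin (n i) → k)) :=
    fun u => toProj k n u.1 u.2 with hfdef
  set W : MvPolynomial ((i : Fin s) × Fin (n i)) k →
      Set ((i : Fin s) → Projectivization k (Fin (n i) → k)) :=
    fun p => {z | ∃ x, ∃ hx : x ∈ Uset k n, toProj k n x hx = z ∧ eval x p ≠ 0} with hWdef
  have hWopen : ∀ p, IsOpen (W p) := by
    intro p
    rw [isOpen_coinduced (f := f)]
    have hpre : f ⁻¹' (W p) = Subtype.val ⁻¹' (⋃ t : {t : Fin s → k // ∀ i, t i ≠ 0},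
        {x | eval x (bind₁ (fun v : (i : Fin s) × Fin (n i) =>
          (C (t.1 v.1) * X v : MvPolynomial ((i : Fin s) × Fin (n i)) k)) p) ≠ 0}) := by
      ext u
      constructor
      · rintro ⟨v, hv, hvz, hvp⟩
        obtain ⟨t, ht, rfl⟩ := toProj_eq_imp k n u.2 hv hvz
        exact Set.mem_preimage.2 (Set.mem_iUnion.2 ⟨⟨t, ht⟩, by
          simpa [eval_scale_eq] using hvp⟩)
      · intro hu
        obtain ⟨t, htmem⟩ := Set.mem_iUnion.1 (Set.mem_preimage.1 hu)
        refine ⟨scale k n t.1 u.1, scale_mem_U k n t.2 u.2, toProj_scale k n t.2 u.2 _, ?_⟩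
        simpa [eval_scale_eq] using htmem
    rw [hpre]
    exact IsOpen.preimage continuous_subtype_val (isOpen_iUnion fun t => isOpen_basic _)
  -- `S` is preirreducible
  have hSpre : IsPreirreducible S := by
    rintro O1 O2 hO1 hO2 ⟨x1, hx1S, hx1O⟩ ⟨x2, hx2S, hx2O⟩
    obtain ⟨p1, hp1, hp1O⟩ := exists_basic_s9 hO1 x1 hx1O
    obtain ⟨p2, hp2, hp2O⟩ := exists_basic_s9 hO2 x2 hx2O
    have h1 : (Zset k n q ∩ W p1).Nonempty :=
      ⟨toProj k n x1 hx1S.2, ⟨x1, hx1S.2, hx1S.1, rfl⟩, ⟨x1, hx1S.2, rfl, hp1⟩⟩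
    have h2 : (Zset k n q ∩ W p2).Nonempty :=
      ⟨toProj k n x2 hx2S.2, ⟨x2, hx2S.2, hx2S.1, rfl⟩, ⟨x2, hx2S.2, rfl, hp2⟩⟩
    obtain ⟨z, hzZ, hzW1, hzW2⟩ := hZirr.2 (W p1) (W p2) (hWopen p1) (hWopen p2) h1 h2
    obtain ⟨x, hxU, hxC, hxz⟩ := hzZ
    obtain ⟨v1, hv1U, hv1z, hv1p⟩ := hzW1
    obtain ⟨v2, hv2U, hv2z, hv2p⟩ := hzW2
    obtain ⟨t1, ht1, hveq1⟩ := toProj_eq_imp k n hxU hv1U (hv1z.trans hxz.symm)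
    obtain ⟨t2, ht2, hveq2⟩ := toProj_eq_imp k n hxU hv2U (hv2z.trans hxz.symm)
    subst hveq1; subst hveq2
    set g : ((i : Fin s) × Fin (n i)) → MvPolynomial (Fin s) k :=
      fun vv => C (x vv) * X vv.1 with hgdef
    have evalg : ∀ (p : MvPolynomial ((i : Fin s) × Fin (n i)) k) (t : Fin s → k),
        eval t (bind₁ g p) = eval (scale k n t x) p := by
      intro p t
      rw [eval_bind']
      have hfun : (fun vv : (i : Fin s) × Fin (n i) => eval t (g vv)) = scale k n t x :=
        funext fun vv => by simp [hgdef, scale, mul_comm]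
      rw [hfun]
    have hP1 : bind₁ g p1 ≠ 0 := fun h => hv1p (by rw [← evalg p1 t1, h, map_zero])
    have hP2 : bind₁ g p2 ≠ 0 := fun h => hv2p (by rw [← evalg p2 t2, h, map_zero])
    have hX : (∏ i : Fin s, (X i : MvPolynomial (Fin s) k)) ≠ 0 :=
      Finset.prod_ne_zero_iff.2 fun i _ => MvPolynomial.X_ne_zero i
    obtain ⟨tst, htst⟩ := exists_eval_ne (mul_ne_zero (mul_ne_zero hX hP1) hP2)
    rw [map_mul, map_mul, map_prod] at htst
    simp only [eval_X] at htst
    have ht : ∀ i, tst i ≠ 0 := fun i hi =>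
      (left_ne_zero_of_mul (left_ne_zero_of_mul htst))
        (Finset.prod_eq_zero (Finset.mem_univ i) hi)
    have hy1 : eval (scale k n tst x) p1 ≠ 0 := by
      rw [← evalg]; exact right_ne_zero_of_mul (left_ne_zero_of_mul htst)
    have hy2 : eval (scale k n tst x) p2 ≠ 0 := by
      rw [← evalg]; exact right_ne_zero_of_mul htst
    exact ⟨scale k n tst x, ⟨scale_mem_C ht hxC, scale_mem_U k n ht hxU⟩,
      hp1O _ hy1, hp2O _ hy2⟩
  have hSirr : IsIrreducible S := ⟨hSne, hSpre⟩
  -- points with `i`-th component zero and all others nonzero lie in `closure S`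
  have hone : ∀ j : Fin s, (fun _ => (1:k)) ≠ (0 : Fin (n j) → k) := by
    intro j h
    have := congrFun h ⟨0, hn j⟩
    norm_num at this
  have hG : ∀ i : Fin s, ∀ w : ((i : Fin s) × Fin (n i)) → k,
      comp k n w i = 0 → (∀ j, j ≠ i → comp k n w j ≠ 0) → w ∈ closure S := by
    intro i w hwi hwj
    apply mem_closure_of_basic
    intro p hp
    set pt : ∀ j : Fin s, Projectivization k (Fin (n j) → k) := fun j =>
      if h : j = i then Projectivization.mk k (fun _ => (1:k)) (hone j)
      else Projectivization.mk k (comp k n w j) (hwj j h) with hptdef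
    obtain ⟨z, hzZ, hz⟩ := hsurj i pt
    obtain ⟨x, hxU, hxC, hxz⟩ := hzZ
    have key : ∀ j, ∀ hj : j ≠ i, ∃ a : kˣ, a • comp k n w j = comp k n x j := by
      intro j hj
      have h1 : Projectivization.mk k (comp k n x j) (fun h => hxU ⟨j, h⟩) =
          Projectivization.mk k (comp k n w j) (hwj j hj) := by
        have h2 : toProj k n x hxU j = pt j := by rw [hxz]; exact hz j hj
        rw [hptdef] at h2
        simpa [toProj, dif_neg hj] using h2
      exact (Projectivization.mk_eq_mk_iff k _ _ _ _).1 h1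
    choose a ha using key
    set tfun : k → (Fin s → k) := fun lam j =>
      if h : j = i then lam else (((a j h)⁻¹ : kˣ) : k) with htfdef
    set g2 : ((i' : Fin s) × Fin (n i')) → MvPolynomial Unit k := fun vv =>
      (if h : vv.1 = i then (X () : MvPolynomial Unit k)
        else C (((a vv.1 h)⁻¹ : kˣ) : k)) * C (x vv) with hg2def
    have evalg2 : ∀ c : k, eval (fun _ => c) (bind₁ g2 p)
        = eval (scale k n (tfun c) x) p := by
      intro c
      rw [eval_bind']
      have hfun : (fun vv : (i' : Fin s) × Fin (n i') => eval (fun _ => c) (g2 vv))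
          = scale k n (tfun c) x := by
        funext vv
        rcases vv with ⟨j, b⟩
        by_cases h : j = i
        · simp [hg2def, htfdef, scale, h]
        · simp [hg2def, htfdef, scale, h]
      rw [hfun]
    have hscale0 : scale k n (tfun 0) x = w := by
      funext vv
      rcases vv with ⟨j, b⟩
      by_cases h : j = i
      · subst h
        have hw0 : w ⟨j, b⟩ = 0 := congrFun hwi b
        simp [scale, htfdef, hw0]
      · have hx' := congrFun (ha j h) b
        simp only [Pi.smul_apply, Units.smul_def, smul_eq_mul, comp] at hx'
        simp only [scale, htfdef, dif_neg h]
        rw [← hx', ← mul_assoc]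
        rw [Units.val_inv_eq_inv_val, inv_mul_cancel₀ (Units.ne_zero _), one_mul]
    have hP : bind₁ g2 p ≠ 0 := by
      intro h
      apply hp
      have h1 := evalg2 0
      rw [h, map_zero, hscale0] at h1
      exact h1.symm
    obtain ⟨lam, hlam⟩ := exists_eval_ne (mul_ne_zero (X_ne_zero ()) hP)
    rw [map_mul, eval_X] at hlam
    have hl0 : lam () ≠ 0 := left_ne_zero_of_mul hlam
    have hlP := right_ne_zero_of_mul hlam
    have hetalam : lam = fun _ => lam () := funext fun u => rfl
    rw [hetalam, evalg2] at hlP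
    have htf : ∀ j, tfun (lam ()) j ≠ 0 := by
      intro j
      by_cases h : j = i
      · subst h; simpa [htfdef] using hl0
      · simp [htfdef, dif_neg h]
    exact ⟨scale k n (tfun (lam ())) x,
      ⟨scale_mem_C htf hxC, scale_mem_U k n htf hxU⟩, hlP⟩
  -- `D ⊆ closure S`
  have hDcl : Dset k n ⊆ closure S := by
    rintro v ⟨i, hvi⟩
    have hfac : ∀ c : k, (C c + X () : MvPolynomial Unit k) ≠ 0 := by
      intro c h
      have := congrArg (eval (fun _ => 1 - c)) h
      rw [map_add, eval_C, eval_X, map_zero] at this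
      simp at this
    have hGi : v ∈ closure {w : ((i' : Fin s) × Fin (n i')) → k |
        comp k n w i = 0 ∧ ∀ j, j ≠ i → comp k n w j ≠ 0} := by
      apply mem_closure_of_basic
      intro p hp
      set g3 : ((i' : Fin s) × Fin (n i')) → MvPolynomial Unit k := fun vv =>
        if vv.1 = i then 0 else C (v vv) + X () with hg3def
      have evalg3 : ∀ c : k, eval (fun _ => c) (bind₁ g3 p)
          = eval (fun vv : (i' : Fin s) × Fin (n i') =>
              if vv.1 = i then 0 else v vv + c) p := by
        intro c
        rw [eval_bind']
        have hfun : (fun vv : (i' : Fin s) × Fin (n i') => eval (fun _ => c) (g3 vv))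
            = fun vv : (i' : Fin s) × Fin (n i') => if vv.1 = i then 0 else v vv + c := by
          funext vv
          by_cases h : vv.1 = i <;> simp [hg3def, h]
        rw [hfun]
      have h0 : (fun vv : (i' : Fin s) × Fin (n i') =>
          if vv.1 = i then (0:k) else v vv + 0) = v := by
        funext vv
        rcases vv with ⟨j, b⟩
        by_cases h : j = i
        · subst h
          have hv0 : v ⟨j, b⟩ = 0 := congrFun hvi b
          simp [hv0]
        · simp [h]
      have hP : bind₁ g3 p ≠ 0 := by
        intro h
        apply hp
        have h1 := evalg3 0
        rw [h, map_zero, h0] at h1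
        exact h1.symm
      have hQ : bind₁ g3 p * ∏ j ∈ Finset.univ.erase i,
          (C (v ⟨j, ⟨0, hn j⟩⟩) + X () : MvPolynomial Unit k) ≠ 0 :=
        mul_ne_zero hP (Finset.prod_ne_zero_iff.2 fun j _ => hfac _)
      obtain ⟨lam, hlam⟩ := exists_eval_ne hQ
      rw [map_mul, map_prod] at hlam
      have hlP := left_ne_zero_of_mul hlam
      have hlfac : ∀ j, j ≠ i → v ⟨j, ⟨0, hn j⟩⟩ + lam () ≠ 0 := by
        intro j hj hzero
        apply right_ne_zero_of_mul hlam
        apply Finset.prod_eq_zero (Finset.mem_erase.2 ⟨hj, Finset.mem_univ j⟩)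
        rw [map_add, eval_C, eval_X, hzero]
      have hetalam : lam = fun _ => lam () := funext fun u => rfl
      rw [hetalam, evalg3] at hlP
      refine ⟨fun vv => if vv.1 = i then 0 else v vv + lam (), ⟨?_, ?_⟩, hlP⟩
      · funext b
        simp [comp]
      · intro j hj hzero
        have := congrFun hzero ⟨0, hn j⟩
        simp only [comp, Pi.zero_apply] at this
        rw [if_neg hj] at this
        exact hlfac j hj this
    refine (closure_minimal ?_ isClosed_closure) hGi
    intro w hw
    exact hG i w hw.1 hw.2
  -- conclusion: `C = closure S`
  have hCclosed : IsClosed (Cset k n q) := by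
    have hCeq : Cset k n q = ⋂ j, {x | eval x (q j) = 0} := by
      ext x
      simp [Cset, Set.mem_iInter]
    rw [hCeq]
    refine isClosed_iInter fun j => ?_
    rw [show {x : ((i : Fin s) × Fin (n i)) → k | eval x (q j) = 0}
        = {x | eval x (q j) ≠ 0}ᶜ from by ext x; simp]
    exact (isOpen_basic (q j)).isClosed_compl
  have hfinal : closure S = Cset k n q := by
    apply subset_antisymm
    · exact closure_minimal Set.inter_subset_left hCclosed
    · intro x hx
      by_cases hxU : x ∈ Uset k n
      · exact subset_closure ⟨hx, hxU⟩
      · exact hDcl (not_not.1 hxU)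
  rw [← hfinal]
  exact hSirr.closure
end
end
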